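/- Let L ≥ 2, let k = (k_1,…,k_L) with all k_ℓ ≥ 1 and s = (s_1,…,s_L) with all s_ℓ ≥ 1, and let k := k_1 + Σ_{ℓ=2}^L (k_ℓ−1)S_ℓ where S_ℓ := s_1⋯s_{ℓ−1}. Set k′ := (k_1 + s_1(k_2−1), k_3, …, k_L) and s′ := (s_1·s_2, s_3, …, s_L). Then F(k,s) equals the set of all Q ∈ F(k′,s′) for which there exists a homogeneous polynomial D ∈ ℂ[x,y] of degree ≥ k − k_1, all of whose monomials involve only x^{s_1} and y^{s_1}, such that D divides every component of σ_{s_1}(Q). -/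

import Mathlib

/-- All monomials of `P` involve only `x^s` and `y^s`. -/
def MonoS (s : ℕ) (P : MvPolynomial (Fin 2) ℂ) : Prop :=
  ∀ m ∈ P.support, s ∣ m 0 ∧ s ∣ m 1

/-- `S ℓ = s_1 ⋯ s_{ℓ-1}` (0-indexed: `Sp s i = ∏_{j<i} s j`, so `Sp s 0 = 1`). -/
def Sp (s : ℕ → ℕ) (i : ℕ) : ℕ := ∏ j ∈ Finset.range i, s j

/-- `F(k,s)`: homogeneous polynomials of degree `k-1` admitting a factorization
`P = P_L ⋯ P_1`, where `P_ℓ` is homogeneous of degree `S_ℓ(k_ℓ-1)` with all monomials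
in `x^{S_ℓ}, y^{S_ℓ}` (layers are 0-indexed here). -/
def Fset (L : ℕ) (k s : ℕ → ℕ) : Set (MvPolynomial (Fin 2) ℂ) :=
  { P | ∃ Q : ℕ → MvPolynomial (Fin 2) ℂ, P = ∏ i ∈ Finset.range L, Q i ∧
      ∀ i < L, (Q i).IsHomogeneous (Sp s i * (k i - 1)) ∧ MonoS (Sp s i) (Q i) }

/-- `p` is the `s`-decomposition `σ_s(P)` of the homogeneous polynomial `P` of degree `m`. -/
def IsSigma (s m : ℕ) (P : MvPolynomial (Fin 2) ℂ)
    (p : Fin s → MvPolynomial (Fin 2) ℂ) : Prop :=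
  (∀ i : Fin s, (p i).IsHomogeneous (s * ((m - i.val) / s)) ∧ MonoS s (p i) ∧
      (m < i.val → p i = 0)) ∧
  P = ∑ i : Fin s,
    MvPolynomial.X 0 ^ i.val * MvPolynomial.X 1 ^ ((m - i.val) % s) * p i


/-!
Write `P = P_L ⋯ P_2 · P_1` and let `E = P_L ⋯ P_3`. Since `E` only involves `x^{s_1}` and
`y^{s_1}`, the `s_1`-decomposition of a product `R · E` is `σ_{s_1}(R) · E`, and it is unique.
This gives the inclusion `⊆` with `D = P_2 · E`, merging `P_2 · P_1` into the first layer of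
`F(k', s')`.

Conversely let `Q = R · E ∈ F(k', s')`, so that `D` divides every `σ_{s_1}(R)_i · E`, where
`deg D ≥ k - k_1 = s_1 (k_2 - 1) + deg E`. After substituting `x, y` for `x^{s_1}, y^{s_1}`
(which reflects divisibility of homogeneous forms), the quotient `D / gcd(D, E)` has degree at
least `k_2 - 1` and divides every component of `σ_{s_1}(R)`. Binary forms over `ℂ` split into
linear factors, so it has a divisor of degree exactly `k_2 - 1`; expanded back, this is a
divisor `c` of `R`, and `R = P_1 · c` gives the first two layers `P_1`, `P_2 = c` of `F(k, s)`.
-/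

open MvPolynomial

namespace MvPolynomial

section Domain

variable {σ R : Type*} [CommRing R] [IsDomain R] {p q : MvPolynomial σ R} {n : ℕ}

/-- In a product of nonzero polynomials, the lowest and the highest degree add up, so if the
product is homogeneous, both factors must be. -/
theorem IsHomogeneous.of_mul_left (h : (p * q).IsHomogeneous n) (h0 : p * q ≠ 0) :
    p.IsHomogeneous p.totalDegree := by
  have hq : q ≠ 0 := right_ne_zero_of_mul h0
  have hdeg : p.totalDegree + q.totalDegree = n := by
    rw [← totalDegree_mul_of_isDomain (left_ne_zero_of_mul h0) hq, h.totalDegree h0]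
  have horder :
      (n : ℕ∞) ≤ (p : MvPowerSeries σ R).order + (q : MvPowerSeries σ R).order := by
    rw [← MvPowerSeries.order_mul, ← coe_mul]
    refine MvPowerSeries.nat_le_order fun d hd => ?_
    rw [coeff_coe]
    exact h.coeff_eq_zero hd.ne
  obtain ⟨m', hm'⟩ := support_nonempty.mpr hq
  have hq_order : (q : MvPowerSeries σ R).order ≤ q.totalDegree :=
    (MvPowerSeries.order_le (by rwa [coeff_coe, ← mem_support_iff])).trans
      (by exact_mod_cast le_totalDegree hm')
  intro m hm
  have hp_order : (p : MvPowerSeries σ R).order ≤ m.degree :=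
    MvPowerSeries.order_le (by rwa [coeff_coe])
  have hle : m.degree ≤ p.totalDegree := le_totalDegree (mem_support_iff.mpr hm)
  have hge : (n : ℕ∞) ≤ (m.degree + q.totalDegree : ℕ) := by
    push_cast
    exact horder.trans (add_le_add hp_order hq_order)
  have hm_deg : m.degree = p.totalDegree := by
    have := Nat.cast_le.mp hge
    omega
  simpa [Finsupp.degree_eq_weight_one, Pi.one_def] using hm_deg

theorem IsHomogeneous.of_mul_right (h : (p * q).IsHomogeneous n) (h0 : p * q ≠ 0) :
    q.IsHomogeneous q.totalDegree := by
  rw [mul_comm] at h h0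
  exact h.of_mul_left h0

end Domain

section Expand

variable {σ R : Type*} [CommSemiring R] {Q : MvPolynomial σ R} {s n : ℕ}

lemma IsHomogeneous.expand (hQ : Q.IsHomogeneous n) (s : ℕ) :
    (MvPolynomial.expand s Q).IsHomogeneous (s * n) :=
  hQ.aeval _ fun i => isHomogeneous_X_pow i s

lemma IsHomogeneous.of_expand (hs : 0 < s) (h : (MvPolynomial.expand s Q).IsHomogeneous (s * n)) :
    Q.IsHomogeneous n := by
  intro d hd
  rw [← coeff_expand_smul s hs.ne'] at hd
  have hdeg := h hd
  rw [map_nsmul, smul_eq_mul] at hdeg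
  exact Nat.eq_of_mul_eq_mul_left hs hdeg

end Expand

section BinaryForms

lemma IsHomogeneous.apply_zero_add_apply_one {R : Type*} [CommSemiring R]
    {W : MvPolynomial (Fin 2) R} {d : ℕ} (hW : W.IsHomogeneous d) {m : Fin 2 →₀ ℕ}
    (hm : m ∈ W.support) : m 0 + m 1 = d := by
  rw [← Fin.sum_univ_two, ← Finsupp.degree_eq_sum]
  exact (hW.degree_eq_sum_deg_support hm).symm

lemma IsHomogeneous.natDegree_aeval_X_one_le {R : Type*} [CommSemiring R]
    {W : MvPolynomial (Fin 2) R} {d : ℕ} (hW : W.IsHomogeneous d) :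
    (MvPolynomial.aeval ![(Polynomial.X : Polynomial R), 1] W).natDegree ≤ d := by
  rw [W.as_sum, map_sum]
  refine Polynomial.natDegree_sum_le_of_forall_le _ _ fun m hm => ?_
  have hm_deg := hW.apply_zero_add_apply_one hm
  simp only [aeval_monomial, Finsupp.prod_fintype _ _ (fun _ => pow_zero _), Fin.prod_univ_two,
    Matrix.cons_val_zero, Matrix.cons_val_one, one_pow, mul_one, ← Polynomial.C_eq_algebraMap]
  exact (Polynomial.natDegree_C_mul_X_pow_le _ _).trans (by omega)

variable {K : Type*} [Field K] [IsAlgClosed K]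

lemma IsHomogeneous.exists_linear_dvd {W : MvPolynomial (Fin 2) K} {d : ℕ}
    (hW : W.IsHomogeneous d) (hd : 0 < d) :
    ∃ l : MvPolynomial (Fin 2) K, l.IsHomogeneous 1 ∧ l ∣ W := by
  set p := MvPolynomial.aeval ![(Polynomial.X : Polynomial K), 1] W
  have hp : p.natDegree ≤ d := hW.natDegree_aeval_X_one_le
  have hW_eq : W = p.homogenize p.natDegree * X 1 ^ (d - p.natDegree) := by
    rw [← Polynomial.homogenize_one, ← Polynomial.homogenize_mul p 1 le_rfl
      (Polynomial.natDegree_one.trans_le (Nat.zero_le _)), mul_one, Nat.add_sub_cancel' hp,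
      Polynomial.homogenize_eq_of_isHomogeneous hW rfl]
  rcases hp.lt_or_eq with hlt | heq
  · refine ⟨X 1, isHomogeneous_X K 1, ?_⟩
    rw [hW_eq]
    exact (dvd_pow_self _ (by omega)).mul_left _
  · have hp0 : p ≠ 0 := fun h => by
      rw [h, Polynomial.natDegree_zero] at heq
      omega
    obtain ⟨r, hr⟩ := IsAlgClosed.exists_root p (by
      rw [Polynomial.degree_eq_natDegree hp0, heq]
      exact_mod_cast hd.ne')
    refine ⟨(Polynomial.X - Polynomial.C r).homogenize 1,
      Polynomial.isHomogeneous_homogenize _, ?_⟩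
    have hdvd := Polynomial.homogenize_dvd (Polynomial.dvd_iff_isRoot.mpr hr)
    rw [Polynomial.natDegree_X_sub_C] at hdvd
    rw [hW_eq]
    exact hdvd.mul_right _

lemma IsHomogeneous.exists_isHomogeneous_dvd {W : MvPolynomial (Fin 2) K} {d n : ℕ}
    (hW : W.IsHomogeneous d) (hW0 : W ≠ 0) (hn : n ≤ d) :
    ∃ c : MvPolynomial (Fin 2) K, c.IsHomogeneous n ∧ c ∣ W := by
  induction n with
  | zero => exact ⟨1, isHomogeneous_one _ _, one_dvd W⟩
  | succ n ih =>
    obtain ⟨c, hc, w, rfl⟩ := ih (by omega)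
    have hc0 : c ≠ 0 := left_ne_zero_of_mul hW0
    have hw0 : w ≠ 0 := right_ne_zero_of_mul hW0
    have hdeg : n + w.totalDegree = d := by
      rw [← hc.totalDegree hc0, ← totalDegree_mul_of_isDomain hc0 hw0, hW.totalDegree hW0]
    obtain ⟨l, hl, hlw⟩ := (hW.of_mul_right hW0).exists_linear_dvd (by omega)
    exact ⟨c * l, hc.mul hl, mul_dvd_mul_left c hlw⟩

lemma IsHomogeneous.exists_isHomogeneous_dvd_of_dvd_mul {D E : MvPolynomial (Fin 2) K}
    {d e n : ℕ} (hD : D.IsHomogeneous d) (hE : E.IsHomogeneous e) (hE0 : E ≠ 0)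
    (hn : n + e ≤ d) {ι : Type*} (r : ι → MvPolynomial (Fin 2) K)
    (hr : ∀ i, D ∣ r i * E) :
    ∃ c : MvPolynomial (Fin 2) K, c.IsHomogeneous n ∧ ∀ i, c ∣ r i := by
  let := UniqueFactorizationMonoid.toGCDMonoid (MvPolynomial (Fin 2) K)
  by_cases hD0 : D = 0
  · refine ⟨0, isHomogeneous_zero _ _ _, fun i => ?_⟩
    simpa [hD0, hE0] using hr i
  obtain ⟨D', hD'⟩ := gcd_dvd_left D E
  obtain ⟨E', hE'⟩ := gcd_dvd_right D E
  have hG0 : gcd D E ≠ 0 := fun h => hD0 (by rw [hD', h, zero_mul])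
  have hD'0 : D' ≠ 0 := fun h => hD0 (by rw [hD', h, mul_zero])
  have hE'0 : E' ≠ 0 := fun h => hE0 (by rw [hE', h, mul_zero])
  have hD'r : ∀ i, D' ∣ r i := fun i => by
    have h := dvd_gcd_mul_of_dvd_mul (mul_comm (r i) E ▸ hr i)
    rw [hD'] at h
    exact (mul_dvd_mul_iff_left hG0).mp (hD' ▸ h)
  have hdeg : n ≤ D'.totalDegree := by
    have h1 := totalDegree_mul_of_isDomain hG0 hD'0
    have h2 := totalDegree_mul_of_isDomain hG0 hE'0
    rw [← hD', hD.totalDegree hD0] at h1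
    rw [← hE', hE.totalDegree hE0] at h2
    omega
  have hD'hom : D'.IsHomogeneous D'.totalDegree :=
    (show (gcd D E * D').IsHomogeneous d by rw [← hD']; exact hD).of_mul_right (hD' ▸ hD0)
  obtain ⟨c, hc, hcD'⟩ := hD'hom.exists_isHomogeneous_dvd hD'0 hdeg
  exact ⟨c, hc, fun i => hcD'.trans (hD'r i)⟩

end BinaryForms

end MvPolynomial

section MonoS

variable {s t : ℕ} {P Q : MvPolynomial (Fin 2) ℂ}

lemma monoS_zero (s : ℕ) : MonoS s 0 := by simp [MonoS]

lemma monoS_one (P : MvPolynomial (Fin 2) ℂ) : MonoS 1 P := fun _ _ => ⟨one_dvd _, one_dvd _⟩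

lemma monoS_monomial {d : Fin 2 →₀ ℕ} (h0 : s ∣ d 0) (h1 : s ∣ d 1) (c : ℂ) :
    MonoS s (monomial d c) := by
  intro m hm
  rw [Finset.mem_singleton.mp (support_monomial_subset hm)]
  exact ⟨h0, h1⟩

lemma monoS_expand (s : ℕ) (Q : MvPolynomial (Fin 2) ℂ) : MonoS s (expand s Q) := by
  classical
  intro m hm
  obtain ⟨n, -, rfl⟩ := Finset.mem_image.mp (support_expand_subset Q hm)
  exact ⟨⟨n 0, by simp⟩, ⟨n 1, by simp⟩⟩

lemma MonoS.of_dvd (h : MonoS s P) (hts : t ∣ s) : MonoS t P :=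
  fun m hm => ⟨hts.trans (h m hm).1, hts.trans (h m hm).2⟩

lemma MonoS.add (hP : MonoS s P) (hQ : MonoS s Q) : MonoS s (P + Q) := by
  classical
  intro m hm
  rcases Finset.mem_union.mp (support_add hm) with h | h
  exacts [hP m h, hQ m h]

lemma MonoS.sub (hP : MonoS s P) (hQ : MonoS s Q) : MonoS s (P - Q) := by
  classical
  intro m hm
  rcases Finset.mem_union.mp (support_sub _ P Q hm) with h | h
  exacts [hP m h, hQ m h]

lemma MonoS.mul (hP : MonoS s P) (hQ : MonoS s Q) : MonoS s (P * Q) := by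
  classical
  intro m hm
  obtain ⟨a, ha, b, hb, rfl⟩ := Finset.mem_add.mp (support_mul P Q hm)
  exact ⟨by simpa using dvd_add (hP a ha).1 (hQ b hb).1,
    by simpa using dvd_add (hP a ha).2 (hQ b hb).2⟩

lemma MonoS.prod {ι : Type*} (t : Finset ι) {f : ι → MvPolynomial (Fin 2) ℂ}
    (h : ∀ i ∈ t, MonoS s (f i)) : MonoS s (∏ i ∈ t, f i) :=
  Finset.prod_induction f (MonoS s) (fun _ _ => MonoS.mul)
    (by simpa using monoS_monomial (s := s) (d := 0) (dvd_zero s) (dvd_zero s) 1) h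

lemma MonoS.dvd_of_isHomogeneous {e : ℕ} (h : MonoS s P) (hP : P.IsHomogeneous e)
    (hP0 : P ≠ 0) : s ∣ e := by
  obtain ⟨m, hm⟩ := support_nonempty.mpr hP0
  rw [← hP.apply_zero_add_apply_one hm]
  exact dvd_add (h m hm).1 (h m hm).2

lemma MonoS.exists_expand_eq (h : MonoS s P) : ∃ Q, expand s Q = P := by
  classical
  have hdiv : ∀ d ∈ P.support, ∃ d', s • d' = d := fun d hd =>
    ⟨d.mapRange (· / s) (Nat.zero_div s), by
      ext i
      fin_cases i
      exacts [Nat.mul_div_cancel' (h d hd).1, Nat.mul_div_cancel' (h d hd).2]⟩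
  choose! f hf using hdiv
  refine ⟨∑ d ∈ P.support, monomial (f d) (coeff d P), ?_⟩
  conv_rhs => rw [← P.support_sum_monomial_coeff]
  rw [map_sum]
  exact Finset.sum_congr rfl fun d hd => by rw [expand_monomial, hf d hd]

lemma MonoS.exists_isHomogeneous_expand_eq (hs : 0 < s) (h : MonoS s P) {e : ℕ}
    (hP : P.IsHomogeneous e) : ∃ Q, expand s Q = P ∧ Q.IsHomogeneous (e / s) := by
  obtain ⟨Q, rfl⟩ := h.exists_expand_eq
  refine ⟨Q, rfl, ?_⟩
  by_cases hQ : Q = 0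
  · rw [hQ]
    exact isHomogeneous_zero _ _ _
  obtain ⟨e, rfl⟩ := h.dvd_of_isHomogeneous hP ((expand_ne_zero hs).mpr hQ)
  rw [Nat.mul_div_cancel_left e hs]
  exact hP.of_expand hs

end MonoS

section Sigma

variable {s m : ℕ} {P Q : MvPolynomial (Fin 2) ℂ} {p q : Fin s → MvPolynomial (Fin 2) ℂ}

lemma isSigma_zero : IsSigma s m 0 0 :=
  ⟨fun _ => ⟨isHomogeneous_zero _ _ _, monoS_zero s, fun _ => rfl⟩, by simp⟩

lemma IsSigma.add (hP : IsSigma s m P p) (hQ : IsSigma s m Q q) :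
    IsSigma s m (P + Q) (p + q) := by
  refine ⟨fun i => ⟨(hP.1 i).1.add (hQ.1 i).1, (hP.1 i).2.1.add (hQ.1 i).2.1, fun hi => ?_⟩,
    ?_⟩
  · simp [(hP.1 i).2.2 hi, (hQ.1 i).2.2 hi]
  · simp only [hP.2, hQ.2, Pi.add_apply, mul_add, Finset.sum_add_distrib]

lemma isSigma_single (i : Fin s) (hi : i.val ≤ m) (hQ : Q.IsHomogeneous (s * ((m - i) / s)))
    (hQm : MonoS s Q) :
    IsSigma s m (X 0 ^ i.val * X 1 ^ ((m - i) % s) * Q) (Pi.single i Q) := by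
  refine ⟨fun j => ?_, ?_⟩
  · rcases eq_or_ne j i with rfl | hj
    · exact ⟨by simpa using hQ, by simpa using hQm, fun h => absurd hi (by omega)⟩
    · rw [Pi.single_eq_of_ne hj]
      exact ⟨isHomogeneous_zero _ _ _, monoS_zero s, fun _ => rfl⟩
  · rw [Finset.sum_eq_single i (fun j _ hj => by simp [Pi.single_eq_of_ne hj]) (by simp)]
    simp

lemma isSigma_of_monoS (hs : 0 < s) {n : ℕ} (hP : P.IsHomogeneous (s * n)) (hPm : MonoS s P) :
    IsSigma s (s * n) P (Pi.single ⟨0, hs⟩ P) := by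
  simpa using isSigma_single (m := s * n) ⟨0, hs⟩ (Nat.zero_le _)
    (by rwa [Nat.sub_zero, Nat.mul_div_cancel_left n hs]) hPm

lemma exists_isSigma_monomial (hs : 0 < s) {d : Fin 2 →₀ ℕ} (hd : d 0 + d 1 = m) (c : ℂ) :
    ∃ p, IsSigma s m (monomial d c) p := by
  -- `d = (d 0 % s, d 1 % s) + s • (d 0 / s, d 1 / s)`
  have h0 := Nat.mod_add_div (d 0) s
  have h1 := Nat.mod_add_div (d 1) s
  have hsub : m - d 0 % s = d 1 + s * (d 0 / s) := by omega
  have hmod : (m - d 0 % s) % s = d 1 % s := by rw [hsub, Nat.add_mul_mod_self_left]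
  have hdiv : (m - d 0 % s) / s = d 1 / s + d 0 / s := by
    rw [hsub, Nat.add_mul_div_left _ _ hs]
  set Q : MvPolynomial (Fin 2) ℂ :=
    monomial (Finsupp.single 0 (s * (d 0 / s)) + Finsupp.single 1 (s * (d 1 / s))) c
  have hQ : Q.IsHomogeneous (s * ((m - d 0 % s) / s)) := isHomogeneous_monomial _ (by
    rw [map_add, Finsupp.degree_single, Finsupp.degree_single, hdiv]
    ring)
  have hQm : MonoS s Q := monoS_monomial (by simp) (by simp) c
  refine ⟨_, (show monomial d c = X 0 ^ (d 0 % s) * X 1 ^ ((m - d 0 % s) % s) * Q from ?_) ▸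
    isSigma_single ⟨d 0 % s, Nat.mod_lt _ hs⟩ (by simp; omega) hQ hQm⟩
  rw [hmod, X_pow_eq_monomial, X_pow_eq_monomial, monomial_mul, monomial_mul, one_mul, one_mul]
  congr 2
  ext i
  fin_cases i <;> simp <;> omega

lemma exists_isSigma (hs : 0 < s) (hP : P.IsHomogeneous m) : ∃ p, IsSigma s m P p := by
  rw [← P.support_sum_monomial_coeff]
  refine Finset.sum_induction _ (fun Q => ∃ p, IsSigma s m Q p)
    (fun _ _ ⟨p, hp⟩ ⟨q, hq⟩ => ⟨p + q, hp.add hq⟩) ⟨0, isSigma_zero⟩ fun d hd => ?_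
  exact exists_isSigma_monomial hs (hP.apply_zero_add_apply_one hd) _

lemma IsSigma.mul_right (h : IsSigma s m P p) {E : MvPolynomial (Fin 2) ℂ} {e : ℕ}
    (hE : E.IsHomogeneous e) (hse : s ∣ e) (hEm : MonoS s E) :
    IsSigma s (m + e) (P * E) (fun i => p i * E) := by
  obtain ⟨a, rfl⟩ := hse
  have hshift : ∀ i : Fin s, i.val ≤ m → m + s * a - i = (m - i) + s * a := fun i _ => by
    omega
  refine ⟨fun i => ?_, ?_⟩
  · by_cases hi : i.val ≤ m
    · refine ⟨?_, (h.1 i).2.1.mul hEm, fun hlt => absurd hi (by omega)⟩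
      rw [hshift i hi, Nat.add_mul_div_left _ _ i.pos, mul_add]
      exact (h.1 i).1.mul hE
    · dsimp only
      rw [(h.1 i).2.2 (by omega), zero_mul]
      exact ⟨isHomogeneous_zero _ _ _, monoS_zero s, fun _ => rfl⟩
  · rw [h.2, Finset.sum_mul]
    refine Finset.sum_congr rfl fun i _ => ?_
    by_cases hi : i.val ≤ m
    · rw [hshift i hi, Nat.add_mul_mod_self_left, mul_assoc]
    · simp [(h.1 i).2.2 (by omega)]

lemma MonoS.apply_zero_mod_of_coeff_X_pow_mul_ne_zero (hQ : MonoS s Q) {a b : ℕ}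
    {d : Fin 2 →₀ ℕ} (hd : coeff d (X 0 ^ a * X 1 ^ b * Q) ≠ 0) : d 0 % s = a % s := by
  rw [X_pow_eq_monomial, X_pow_eq_monomial, monomial_mul, one_mul, coeff_monomial_mul'] at hd
  split_ifs at hd with hle
  · have ha : a ≤ d 0 := by simpa using hle 0
    have hdvd := (hQ _ (mem_support_iff.mpr (right_ne_zero_of_mul hd))).1
    simp only [Finsupp.tsub_apply, Finsupp.add_apply, Finsupp.single_eq_same,
      Finsupp.single_eq_of_ne (by decide : (0 : Fin 2) ≠ 1), add_zero] at hdvd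
    exact ((Nat.modEq_iff_dvd' ha).mpr hdvd).symm
  · exact absurd rfl hd

lemma eq_zero_of_sum_X_pow_mul_eq_zero (r : Fin s → ℕ) (hp : ∀ i, MonoS s (p i))
    (h : ∑ i : Fin s, X 0 ^ i.val * X 1 ^ r i * p i = 0) (i : Fin s) : p i = 0 := by
  -- the `i`-th summand carries exactly the monomials whose `X 0`-exponent is `i` mod `s`
  have hterm : X 0 ^ i.val * X 1 ^ r i * p i = 0 := by
    ext d
    by_contra hd
    have hdi := (hp i).apply_zero_mod_of_coeff_X_pow_mul_ne_zero hd
    apply hd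
    rw [← h, coeff_sum, Finset.sum_eq_single i _ (by simp)]
    intro j _ hji
    by_contra hdj
    have hdj := (hp j).apply_zero_mod_of_coeff_X_pow_mul_ne_zero hdj
    rw [Nat.mod_eq_of_lt i.isLt] at hdi
    rw [Nat.mod_eq_of_lt j.isLt] at hdj
    exact hji (Fin.ext (hdj.symm.trans hdi))
  simpa [X_ne_zero] using hterm

lemma IsSigma.unique (hp : IsSigma s m P p) (hq : IsSigma s m P q) : p = q := by
  funext i
  refine sub_eq_zero.mp (eq_zero_of_sum_X_pow_mul_eq_zero (fun i => (m - i) % s)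
    (fun j => (hp.1 j).2.1.sub (hq.1 j).2.1) ?_ i)
  simp only [mul_sub, Finset.sum_sub_distrib, ← hp.2, ← hq.2, sub_self]

lemma exists_isSigma_mul_dvd (hs : 0 < s) (hP : P.IsHomogeneous m) {E : MvPolynomial (Fin 2) ℂ}
    {e : ℕ} (hE : E.IsHomogeneous e) (hse : s ∣ e) (hEm : MonoS s E) :
    ∃ p, IsSigma s (m + e) (P * E) p ∧ ∀ i, E ∣ p i := by
  obtain ⟨p, hp⟩ := exists_isSigma hs hP
  exact ⟨_, hp.mul_right hE hse hEm, fun i => dvd_mul_left E (p i)⟩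

end Sigma

section CommonDivisor

variable {s : ℕ}

lemma dvd_of_expand_dvd_expand (hs : 0 < s) {a b : MvPolynomial (Fin 2) ℂ} {da db : ℕ}
    (ha : a.IsHomogeneous da) (hb : b.IsHomogeneous db) (h : expand s a ∣ expand s b) :
    a ∣ b := by
  obtain ⟨c, hc⟩ := h
  rw [mul_comm] at hc
  by_cases hb0 : b = 0
  · rw [hb0]
    exact dvd_zero a
  have hac0 : c * expand s a ≠ 0 := hc ▸ (expand_ne_zero hs).mpr hb0
  have hac : (c * expand s a).IsHomogeneous (s * db) := hc ▸ hb.expand s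
  have hc_hom := hac.of_mul_left hac0
  have hdeg : c.totalDegree + s * da = s * db := (hc_hom.mul (ha.expand s)).inj_right hac hac0
  obtain ⟨γ, hγ⟩ := exists_isSigma hs hc_hom
  have hγa := hγ.mul_right (ha.expand s) (dvd_mul_right s da) (monoS_expand s a)
  rw [hdeg, ← hc] at hγa
  -- `expand s b` is its own `0`-th component, so the `0`-th component of `c` is the quotient
  have h0 := congrFun
    ((isSigma_of_monoS hs (hb.expand s) (monoS_expand s b)).unique hγa) ⟨0, hs⟩
  obtain ⟨g, hg⟩ := (hγ.1 ⟨0, hs⟩).2.1.exists_expand_eq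
  simp only [Pi.single_eq_same, ← hg, ← map_mul] at h0
  exact ⟨g, by rw [(expand_injective hs) h0, mul_comm]⟩

lemma exists_monoS_dvd_of_dvd_mul (hs : 0 < s) {D E : MvPolynomial (Fin 2) ℂ} {d e n : ℕ}
    (hD : D.IsHomogeneous d) (hDm : MonoS s D) (hE : E.IsHomogeneous e) (hEm : MonoS s E)
    (hE0 : E ≠ 0) (hn : s * n + e ≤ d) {ι : Type*} (r : ι → MvPolynomial (Fin 2) ℂ)
    {k : ι → ℕ} (hr : ∀ i, (r i).IsHomogeneous (k i)) (hrm : ∀ i, MonoS s (r i))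
    (hdvd : ∀ i, D ∣ r i * E) :
    ∃ c : MvPolynomial (Fin 2) ℂ,
      c.IsHomogeneous (s * n) ∧ MonoS s c ∧ ∀ i, c ∣ r i := by
  obtain ⟨D', rfl, hD'⟩ := hDm.exists_isHomogeneous_expand_eq hs hD
  obtain ⟨E', rfl, hE'⟩ := hEm.exists_isHomogeneous_expand_eq hs hE
  choose r' hr'r hr' using fun i => (hrm i).exists_isHomogeneous_expand_eq hs (hr i)
  obtain ⟨e', rfl⟩ := hEm.dvd_of_isHomogeneous hE hE0
  have hn' : n + e' ≤ d / s := by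
    rw [Nat.le_div_iff_mul_le hs]
    linarith
  rw [Nat.mul_div_cancel_left _ hs] at hE'
  obtain ⟨c, hc, hcr⟩ := hD'.exists_isHomogeneous_dvd_of_dvd_mul hE'
    (fun h => hE0 (by rw [h, map_zero])) hn' r' fun i =>
      dvd_of_expand_dvd_expand hs hD' ((hr' i).mul hE') (by rw [map_mul, hr'r]; exact hdvd i)
  exact ⟨expand s c, hc.expand s, monoS_expand s c, fun i => hr'r i ▸ map_dvd _ (hcr i)⟩

lemma exists_factor_of_isSigma_mul_dvd (hs : 0 < s) {R E D : MvPolynomial (Fin 2) ℂ}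
    {d n e d' : ℕ} (hR : R.IsHomogeneous (d + s * n)) (hE : E.IsHomogeneous e)
    (hEm : MonoS s E) (hE0 : E ≠ 0) (hD : D.IsHomogeneous d') (hDm : MonoS s D)
    (hd' : s * n + e ≤ d') {p : Fin s → MvPolynomial (Fin 2) ℂ}
    (hp : IsSigma s (d + (s * n + e)) (R * E) p) (hdvd : ∀ i, D ∣ p i) :
    ∃ Q c : MvPolynomial (Fin 2) ℂ,
      R = Q * c ∧ Q.IsHomogeneous d ∧ c.IsHomogeneous (s * n) ∧ MonoS s c := by
  by_cases hR0 : R = 0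
  · exact ⟨0, 0, by simp [hR0], isHomogeneous_zero _ _ _, isHomogeneous_zero _ _ _,
      monoS_zero s⟩
  obtain ⟨r, hr⟩ := exists_isSigma hs hR
  have hpr : p = fun i => r i * E := by
    rw [← add_assoc] at hp
    exact hp.unique (hr.mul_right hE (hEm.dvd_of_isHomogeneous hE hE0) hEm)
  obtain ⟨c, hc, hcm, hcr⟩ := exists_monoS_dvd_of_dvd_mul hs hD hDm hE hEm hE0 hd' r
    (fun i => (hr.1 i).1) (fun i => (hr.1 i).2.1) (fun i => by simpa [hpr] using hdvd i)
  choose t ht using hcr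
  set Q := ∑ i : Fin s, X 0 ^ i.val * X 1 ^ ((d + s * n - i) % s) * t i
  have hRQ : R = Q * c := by
    rw [hr.2, Finset.sum_mul]
    exact Finset.sum_congr rfl fun i _ => by rw [ht]; ring
  have hQc : (Q * c).IsHomogeneous (d + s * n) := hRQ ▸ hR
  have hQ := hQc.of_mul_left (hRQ ▸ hR0)
  have hdeg : Q.totalDegree + s * n = d + s * n := (hQ.mul hc).inj_right hQc (hRQ ▸ hR0)
  exact ⟨Q, c, hRQ, by rwa [Nat.add_right_cancel hdeg] at hQ, hc, hcm⟩

end CommonDivisor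

section Layers

variable {k s : ℕ → ℕ} {a n : ℕ} {P : MvPolynomial (Fin 2) ℂ}

@[simp] lemma Sp_zero (s : ℕ → ℕ) : Sp s 0 = 1 := Finset.prod_range_zero s

@[simp] lemma Sp_one (s : ℕ → ℕ) : Sp s 1 = s 0 := Finset.prod_range_one s

lemma dvd_Sp (s : ℕ → ℕ) {i : ℕ} (hi : 0 < i) : s 0 ∣ Sp s i :=
  Finset.dvd_prod_of_mem s (Finset.mem_range.mpr hi)

lemma Sp_dvd_Sp_add (s : ℕ → ℕ) (a i : ℕ) : Sp s a ∣ Sp s (a + i) :=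
  Finset.prod_dvd_prod_of_subset _ _ _ (Finset.range_subset_range.mpr (Nat.le_add_right a i))

lemma Sp_succ_of_merge {s' : ℕ → ℕ} (hs'0 : s' 0 = s 0 * s 1)
    (hs' : ∀ i, 1 ≤ i → s' i = s (i + 1)) (i : ℕ) : Sp s' (i + 1) = Sp s (i + 2) := by
  induction i with
  | zero => simp [Sp, Finset.prod_range_succ, hs'0]
  | succ i ih => rw [Sp, Finset.prod_range_succ, ← Sp, ih, hs' _ (by omega), Sp, Sp,
      Finset.prod_range_succ (f := s) (i + 2)]

lemma sum_Ico_one_add_two (k s : ℕ → ℕ) (n : ℕ) :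
    ∑ i ∈ Finset.Ico 1 (n + 2), (k i - 1) * Sp s i =
      s 0 * (k 1 - 1) + ∑ i ∈ Finset.range n, Sp s (2 + i) * (k (2 + i) - 1) := by
  rw [Finset.sum_Ico_eq_sum_range, show n + 2 - 1 = n + 1 from rfl, Finset.sum_range_succ',
    add_comm, add_zero, Sp_one, mul_comm]
  exact congrArg _ (Finset.sum_congr rfl fun i _ => by rw [mul_comm, add_comm i, ← add_assoc])

def IsLayer (k s : ℕ → ℕ) (i : ℕ) (Q : MvPolynomial (Fin 2) ℂ) : Prop :=
  Q.IsHomogeneous (Sp s i * (k i - 1)) ∧ MonoS (Sp s i) Q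

def FsetFrom (a n : ℕ) (k s : ℕ → ℕ) : Set (MvPolynomial (Fin 2) ℂ) :=
  { P | ∃ Q : ℕ → MvPolynomial (Fin 2) ℂ, P = ∏ i ∈ Finset.range n, Q i ∧
      ∀ i < n, IsLayer k s (a + i) (Q i) }

@[simp] lemma isLayer_zero_iff {Q : MvPolynomial (Fin 2) ℂ} :
    IsLayer k s 0 Q ↔ Q.IsHomogeneous (k 0 - 1) := by
  simp [IsLayer, monoS_one]

@[simp] lemma isLayer_one_iff {Q : MvPolynomial (Fin 2) ℂ} :
    IsLayer k s 1 Q ↔ Q.IsHomogeneous (s 0 * (k 1 - 1)) ∧ MonoS (s 0) Q := by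
  simp [IsLayer]

lemma Fset_eq_FsetFrom (L : ℕ) (k s : ℕ → ℕ) : Fset L k s = FsetFrom 0 L k s := by
  simp [Fset, FsetFrom, IsLayer]

lemma mem_FsetFrom_succ :
    P ∈ FsetFrom a (n + 1) k s ↔
      ∃ Q E, P = Q * E ∧ IsLayer k s a Q ∧ E ∈ FsetFrom (a + 1) n k s := by
  constructor
  · rintro ⟨Q, rfl, hQ⟩
    refine ⟨Q 0, ∏ i ∈ Finset.range n, Q (i + 1), by rw [Finset.prod_range_succ', mul_comm],
      hQ 0 (by omega), fun i => Q (i + 1), rfl, fun i hi => ?_⟩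
    simpa [Nat.add_assoc, Nat.add_comm 1 i] using hQ (i + 1) (by omega)
  · rintro ⟨Q₀, E, rfl, hQ₀, Q, rfl, hQ⟩
    refine ⟨fun i => if i = 0 then Q₀ else Q (i - 1), ?_, fun i hi => ?_⟩
    · simp [Finset.prod_range_succ', mul_comm]
    · rcases i with _ | i
      · simpa using hQ₀
      · simpa [Nat.add_assoc, Nat.add_comm 1 i] using hQ i (by omega)

lemma FsetFrom_congr {a' : ℕ} {k' s' : ℕ → ℕ}
    (h : ∀ i, Sp s' (a' + i) = Sp s (a + i) ∧ k' (a' + i) = k (a + i)) :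
    FsetFrom a' n k' s' = FsetFrom a n k s := by
  simp only [FsetFrom, IsLayer, h]

lemma isHomogeneous_of_mem_FsetFrom (hP : P ∈ FsetFrom a n k s) :
    P.IsHomogeneous (∑ i ∈ Finset.range n, Sp s (a + i) * (k (a + i) - 1)) := by
  obtain ⟨Q, rfl, hQ⟩ := hP
  exact IsHomogeneous.prod _ _ _ fun i hi => (hQ i (Finset.mem_range.mp hi)).1

lemma monoS_of_mem_FsetFrom (hP : P ∈ FsetFrom a n k s) : MonoS (Sp s a) P := by
  obtain ⟨Q, rfl, hQ⟩ := hP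
  exact MonoS.prod _ fun i hi => (hQ i (Finset.mem_range.mp hi)).2.of_dvd (Sp_dvd_Sp_add s a i)

end Layers

theorem stmt_5 (L : ℕ) (hL : 2 ≤ L) (k s : ℕ → ℕ)
    (hk : ∀ i < L, 1 ≤ k i) (hs : ∀ i < L, 1 ≤ s i)
    (K : ℕ) (hK : K = k 0 + ∑ i ∈ Finset.Ico 1 L, (k i - 1) * Sp s i)
    (k' s' : ℕ → ℕ)
    (hk'0 : k' 0 = k 0 + s 0 * (k 1 - 1)) (hk' : ∀ i, 1 ≤ i → k' i = k (i + 1))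
    (hs'0 : s' 0 = s 0 * s 1) (hs' : ∀ i, 1 ≤ i → s' i = s (i + 1)) :
    Fset L k s = { Q | Q ∈ Fset (L - 1) k' s' ∧
      ∃ (D : MvPolynomial (Fin 2) ℂ) (e : ℕ) (p : Fin (s 0) → MvPolynomial (Fin 2) ℂ),
        K - k 0 ≤ e ∧ D.IsHomogeneous e ∧ MonoS (s 0) D ∧
        IsSigma (s 0) (K - 1) Q p ∧ ∀ i, D ∣ p i } := by
  obtain ⟨n, rfl⟩ : ∃ n, L = n + 2 := ⟨L - 2, by omega⟩
  have hs0 : 0 < s 0 := hs 0 (by omega)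
  have hk0 : 1 ≤ k 0 := hk 0 (by omega)
  have htail : FsetFrom 1 n k' s' = FsetFrom 2 n k s := FsetFrom_congr fun i =>
    ⟨by rw [add_comm, Sp_succ_of_merge hs'0 hs', add_comm], by rw [hk' _ (by omega)]; ring_nf⟩
  set e := ∑ i ∈ Finset.range n, Sp s (2 + i) * (k (2 + i) - 1)
  have hKe : K = k 0 + (s 0 * (k 1 - 1) + e) :=
    hK.trans (congrArg _ (sum_Ico_one_add_two k s n))
  have hs0e : s 0 ∣ e := Finset.dvd_sum fun i _ => (dvd_Sp s (by omega)).mul_right _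
  have hdeg : k 0 + s 0 * (k 1 - 1) - 1 = k 0 - 1 + s 0 * (k 1 - 1) := by omega
  have hK1 : K - 1 = k 0 - 1 + (s 0 * (k 1 - 1) + e) := by omega
  have hKk : K - k 0 = s 0 * (k 1 - 1) + e := by omega
  ext P
  simp only [Fset_eq_FsetFrom, show n + 2 - 1 = n + 1 from rfl, mem_FsetFrom_succ, zero_add,
    Nat.reduceAdd, isLayer_zero_iff, isLayer_one_iff, htail, hk'0, hdeg, hK1, hKk,
    Set.mem_ofPred_eq]
  constructor
  · rintro ⟨Q₀, _, rfl, hQ₀, Q₁, E, rfl, ⟨hQ₁, hQ₁m⟩, hE⟩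
    have hD : (Q₁ * E).IsHomogeneous (s 0 * (k 1 - 1) + e) :=
      hQ₁.mul (isHomogeneous_of_mem_FsetFrom hE)
    have hDm := hQ₁m.mul ((monoS_of_mem_FsetFrom hE).of_dvd (dvd_Sp s two_pos))
    obtain ⟨p, hp, hpD⟩ :=
      exists_isSigma_mul_dvd hs0 hQ₀ hD (dvd_add (dvd_mul_right _ _) hs0e) hDm
    exact ⟨⟨Q₀ * Q₁, E, (mul_assoc ..).symm, hQ₀.mul hQ₁, hE⟩, Q₁ * E, _, p, le_rfl, hD, hDm,
      hp, hpD⟩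
  · rintro ⟨⟨R, E, rfl, hR, hE⟩, D, d, p, hd, hD, hDm, hp, hdvd⟩
    by_cases hRE : R * E = 0
    · exact ⟨0, 0, by simp [hRE], isHomogeneous_zero _ _ _, 0, E, by simp,
        ⟨isHomogeneous_zero _ _ _, monoS_zero _⟩, hE⟩
    have hEm := (monoS_of_mem_FsetFrom hE).of_dvd (dvd_Sp s two_pos)
    obtain ⟨Q₀, c, rfl, hQ₀, hc, hcm⟩ := exists_factor_of_isSigma_mul_dvd hs0 hR
      (isHomogeneous_of_mem_FsetFrom hE) hEm (right_ne_zero_of_mul hRE) hD hDm hd hp hdvd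
    exact ⟨Q₀, c * E, mul_assoc .., hQ₀, c, E, rfl, ⟨hc, hcm⟩, hE⟩
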